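/- Let T = (Q, Σ, q0, δ) be a complete deterministic transition system with Q and Σ finite and nonempty and δ : Q × Σ → Q total, and let F ⊆ Q × Σ be a Büchi condition. Consider the directed graph G_F on Q with an edge from p to δ(p, a) for every pair (p, a) ∉ F, and for each strongly connected component C of G_F (an equivalence class of the mutual-reachability relation of G_F) let K(C) = {(p, a) ∈ Q × Σ : p ∈ C, (p, a) ∉ F, δ(p, a) ∈ C}. Define F' = (Q × Σ) ∖ ⋃_C K(C), where the union is over all strongly connected components C of G_F. Then for every infinite word w ∈ Σ^ω, inf_T(w) ∩ F ≠ ∅ if and only if inf_T(w) ∩ F' ≠ ∅; in particular, the deterministic Büchi automata (T, F) and (T, F') accept the same language. -/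
import Mathlib


/-- The run of a complete deterministic transition system on an infinite
word. -/
def runT {Q A : Type*} (δ : Q → A → Q) (q0 : Q) (w : ℕ → A) : ℕ → Q
  | 0 => q0
  | n + 1 => δ (runT δ q0 w n) (w n)

/-- The infinity set of the run on `w`: the state-letter pairs occurring
infinitely often. -/
def infSet {Q A : Type*} (δ : Q → A → Q) (q0 : Q) (w : ℕ → A) : Set (Q × A) :=
  {qa | {n | runT δ q0 w n = qa.1 ∧ w n = qa.2}.Infinite}

/-- The edge relation of the graph `G_F`: an edge from `p` to `δ p a` for
every pair `(p, a) ∉ F`. -/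
def gstep {Q A : Type*} (δ : Q → A → Q) (F : Set (Q × A)) (p q : Q) : Prop :=
  ∃ a, (p, a) ∉ F ∧ δ p a = q

/-- Mutual reachability in the graph `G_F`. -/
def mutualReach {Q A : Type*} (δ : Q → A → Q) (F : Set (Q × A)) (p q : Q) : Prop :=
  Relation.ReflTransGen (gstep δ F) p q ∧ Relation.ReflTransGen (gstep δ F) q p

/-- The strongly connected components of `G_F`: equivalence classes of mutual
reachability. -/
def sccs {Q A : Type*} (δ : Q → A → Q) (F : Set (Q × A)) : Set (Set Q) :=
  {C | ∃ p : Q, C = {q | mutualReach δ F p q}}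

/-- `K(C)`: the non-`F` transitions internal to `C`. -/
def Kset {Q A : Type*} (δ : Q → A → Q) (F : Set (Q × A)) (C : Set Q) :
    Set (Q × A) :=
  {qa | qa.1 ∈ C ∧ qa ∉ F ∧ δ qa.1 qa.2 ∈ C}

/-- For a complete deterministic transition system `(Q, Σ, q0, δ)`
and a Büchi condition `F ⊆ Q × Σ`, letting
`F' = (Q × Σ) \ ⋃_{C SCC of G_F} K(C)`, every infinite word has its infinity
set intersecting `F` iff it intersects `F'`; in particular `(T, F)` and
`(T, F')` accept the same language. -/
theorem buchiCons_characteristic_language {Q A : Type*}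
    [Fintype Q] [Nonempty Q] [Fintype A] [Nonempty A]
    (δ : Q → A → Q) (q0 : Q) (F : Set (Q × A)) :
    (∀ w : ℕ → A,
      (infSet δ q0 w ∩ F).Nonempty ↔
      (infSet δ q0 w ∩
        (Set.univ \ ⋃ C ∈ sccs δ F, Kset δ F C)).Nonempty) ∧
    {w : ℕ → A | (infSet δ q0 w ∩ F).Nonempty} =
      {w : ℕ → A | (infSet δ q0 w ∩
        (Set.univ \ ⋃ C ∈ sccs δ F, Kset δ F C)).Nonempty} := by
  have main : ∀ w : ℕ → A,
      (infSet δ q0 w ∩ F).Nonempty ↔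
      (infSet δ q0 w ∩
        (Set.univ \ ⋃ C ∈ sccs δ F, Kset δ F C)).Nonempty := by
    intro w
    constructor
    · rintro ⟨⟨p, a⟩, hI, hF⟩
      refine ⟨(p, a), hI, Set.mem_univ _, ?_⟩
      simp only [Set.mem_iUnion]
      rintro ⟨C, hC, hK⟩
      exact hK.2.1 hF
    · rintro ⟨⟨p, a⟩, hI, -, hF'⟩
      by_contra hne
      rw [Set.not_nonempty_iff_eq_empty] at hne
      have hdisj : ∀ qa ∈ infSet δ q0 w, qa ∉ F := fun qa h1 h2 =>
        Set.eq_empty_iff_forall_notMem.mp hne qa ⟨h1, h2⟩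
      -- eventually all visited pairs are in the infinity set
      have hfin : {n : ℕ | (runT δ q0 w n, w n) ∉ infSet δ q0 w}.Finite := by
        have hsub : {n : ℕ | (runT δ q0 w n, w n) ∉ infSet δ q0 w} ⊆
            ⋃ qa ∈ {qa : Q × A | qa ∉ infSet δ q0 w},
              {n | runT δ q0 w n = qa.1 ∧ w n = qa.2} := by
          intro n hn
          simp only [Set.mem_iUnion]
          exact ⟨(runT δ q0 w n, w n), hn, rfl, rfl⟩
        refine Set.Finite.subset (Set.Finite.biUnion (Set.finite_univ.subset
          (Set.subset_univ _)) ?_) hsub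
        intro qa hqa
        exact Set.not_infinite.mp hqa
      obtain ⟨N, hN⟩ := hfin.bddAbove
      have hmem : ∀ n, N + 1 ≤ n → (runT δ q0 w n, w n) ∈ infSet δ q0 w := by
        intro n hn
        by_contra h
        exact absurd (hN h) (by omega)
      have hstep : ∀ n, N + 1 ≤ n →
          gstep δ F (runT δ q0 w n) (runT δ q0 w (n + 1)) := by
        intro n hn
        exact ⟨w n, hdisj _ (hmem n hn), rfl⟩
      have hreach : ∀ m n, N + 1 ≤ m → m ≤ n →
          Relation.ReflTransGen (gstep δ F) (runT δ q0 w m) (runT δ q0 w n) := by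
        intro m n hm hmn
        induction n, hmn using Nat.le_induction with
        | base => exact Relation.ReflTransGen.refl
        | succ n hn ih => exact ih.tail (hstep n (le_trans hm hn))
      -- p occurs (with letter a) infinitely often
      have hocc : ∀ M : ℕ, ∃ n, M ≤ n ∧ runT δ q0 w n = p ∧ w n = a := by
        intro M
        obtain ⟨n, hn, hMn⟩ := hI.exists_gt M
        exact ⟨n, le_of_lt hMn, hn.1, hn.2⟩
      obtain ⟨n, hn, hnp, hna⟩ := hocc (N + 1)
      obtain ⟨m, hm, hmp, -⟩ := hocc (n + 1)
      have hforward : Relation.ReflTransGen (gstep δ F) p (δ p a) := by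
        have := hreach n (n + 1) hn (Nat.le_succ n)
        rwa [show runT δ q0 w (n + 1) = δ p a by simp [runT, hnp, hna], hnp] at this
      have hback : Relation.ReflTransGen (gstep δ F) (δ p a) p := by
        have := hreach (n + 1) m (by omega) hm
        rwa [show runT δ q0 w (n + 1) = δ p a by simp [runT, hnp, hna], hmp] at this
      -- contradiction with (p, a) ∈ F'
      apply hF'
      simp only [Set.mem_iUnion]
      refine ⟨{q | mutualReach δ F p q}, ⟨p, rfl⟩, ?_, hdisj _ hI, ?_⟩
      · exact ⟨Relation.ReflTransGen.refl, Relation.ReflTransGen.refl⟩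
      · exact ⟨hforward, hback⟩
  exact ⟨main, Set.ext fun w => main w⟩
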